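/- Let N ≥ 1 and let V, Q : ℝ^N → ℝ be continuous and 1-periodic in each coordinate, with Q continuously differentiable, inf Q > 0 and inf (V+Q) > 0. Then the Nehari set 𝒩 is bounded away from 0: there exists ρ > 0 such that every u ∈ 𝒩 satisfies (∫(|∇u|² + (V+Q)u²) dx)^{1/2} ≥ ρ. -/

import Mathlib

/-!
Write `s = ∫ (u² + |∇u|²)`, `T = ∫ (|∇u|² + (V + Q) u²)` and `c = min 1 (inf (V + Q))`, so that
`c s ≤ T`. On the Nehari set `T = ∫ Q u² (log u² + 1)`, and `t (log t + 1) ≤ (e^α / α) t^{1+α}`;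
with `α = 1/N` the embedding `W^{1,1} ⊆ L^{1+1/N}` applied to `u²`, whose `W^{1,1}` norm is at most
`2 s`, gives `T ≤ K s^{1+1/N}` with `K` independent of `u`. Hence `c ≤ K s^{1/N}` bounds `s`
from below, and then `T ≥ c s`. Being continuous and periodic, `V` and `Q` are bounded, which makes
all these integrals finite.
-/

open MeasureTheory Real

noncomputable section

abbrev Euc (N : ℕ) := EuclideanSpace ℝ (Fin N)

def intVec {N : ℕ} (k : Fin N → ℤ) : Euc N := WithLp.toLp 2 (fun i => (k i : ℝ))

/-- Membership in the Nehari set `𝒩`. -/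
def InNehari {N : ℕ} (V Q u : Euc N → ℝ) : Prop :=
  ContDiff ℝ 1 u ∧ u ≠ 0 ∧
  Integrable (fun x => (u x) ^ 2 + ‖gradient u x‖ ^ 2) volume ∧
  Integrable (fun x => (u x) ^ 2 * Real.log ((u x) ^ 2)) volume ∧
  (∫ x, (‖gradient u x‖ ^ 2 + V x * (u x) ^ 2)) =
    ∫ x, Q x * (u x) ^ 2 * Real.log ((u x) ^ 2)

open scoped ENNReal NNReal
open Module Metric

section Calculus

variable {E F G : Type*} [NormedAddCommGroup E] [NormedSpace ℝ E] [NormedAddCommGroup F]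
  [NormedSpace ℝ F] [NormedAddCommGroup G] [NormedSpace ℝ G]

theorem norm_fderiv_smul_le {c : E → ℝ} {f : E → F} {x : E} (hc : DifferentiableAt ℝ c x)
    (hf : DifferentiableAt ℝ f x) :
    ‖fderiv ℝ (fun y => c y • f y) x‖ ≤ ‖c x‖ * ‖fderiv ℝ f x‖ + ‖fderiv ℝ c x‖ * ‖f x‖ := by
  rw [fderiv_fun_smul hc hf, ← ContinuousLinearMap.norm_smulRight_apply]
  exact (norm_add_le _ _).trans_eq (by rw [norm_smul])

theorem norm_fderiv_comp_clm_le {f : E → F} (L : G →L[ℝ] E) (hL : ‖L‖ ≤ 1) {z : G}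
    (hf : DifferentiableAt ℝ f (L z)) : ‖fderiv ℝ (fun y => f (L y)) z‖ ≤ ‖fderiv ℝ f (L z)‖ := by
  rw [show (fun y => f (L y)) = f ∘ L from rfl, fderiv_comp z hf L.differentiableAt, L.fderiv]
  exact (ContinuousLinearMap.opNorm_comp_le _ _).trans (mul_le_of_le_one_right (norm_nonneg _) hL)

theorem norm_fderiv_sq_le {u : E → ℝ} {x : E} (hu : DifferentiableAt ℝ u x) :
    ‖fderiv ℝ (fun y => u y ^ 2) x‖ ≤ u x ^ 2 + ‖fderiv ℝ u x‖ ^ 2 := by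
  have h := norm_fderiv_smul_le hu hu
  simp only [smul_eq_mul, Real.norm_eq_abs] at h
  simp only [sq]
  nlinarith [sq_nonneg (|u x| - ‖fderiv ℝ u x‖), sq_abs (u x)]

theorem enorm_fderiv_smul_prod_le {v : E → F} {g : G → ℝ} (hv : Differentiable ℝ v)
    (hg : Differentiable ℝ g) (z : E × G) :
    ‖fderiv ℝ (fun z : E × G => g z.2 • v z.1) z‖ₑ ≤
      ‖fderiv ℝ v z.1‖ₑ * ‖g z.2‖ₑ + ‖v z.1‖ₑ * ‖fderiv ℝ g z.2‖ₑ := by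
  have h1 : ‖fderiv ℝ (fun z : E × G => v z.1) z‖ ≤ ‖fderiv ℝ v z.1‖ :=
    norm_fderiv_comp_clm_le (ContinuousLinearMap.fst ℝ E G)
      (ContinuousLinearMap.norm_fst_le ℝ E G) (hv _)
  have h2 : ‖fderiv ℝ (fun z : E × G => g z.2) z‖ ≤ ‖fderiv ℝ g z.2‖ :=
    norm_fderiv_comp_clm_le (ContinuousLinearMap.snd ℝ E G)
      (ContinuousLinearMap.norm_snd_le ℝ E G) (hg _)
  have h := norm_fderiv_smul_le (c := fun z : E × G => g z.2) (f := fun z => v z.1)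
    ((hg _).comp z differentiableAt_snd) ((hv _).comp z differentiableAt_fst)
  simp only [← ofReal_norm]
  rw [← ENNReal.ofReal_mul (norm_nonneg _), ← ENNReal.ofReal_mul (norm_nonneg _),
    ← ENNReal.ofReal_add (by positivity) (by positivity)]
  refine ENNReal.ofReal_le_ofReal (h.trans ?_)
  rw [mul_comm ‖g z.2‖, mul_comm _ ‖v z.1‖]
  gcongr

theorem enorm_fderiv_smul_le_of_norm_le {χ : E → ℝ} {v : E → F} {K : ℝ} {x : E}
    (hχ : DifferentiableAt ℝ χ x) (hv : DifferentiableAt ℝ v x) (hχ1 : ‖χ x‖ ≤ 1)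
    (hK : 0 ≤ K) (hDχ : ‖fderiv ℝ χ x‖ ≤ K) :
    ‖fderiv ℝ (fun x => χ x • v x) x‖ₑ ≤ ‖fderiv ℝ v x‖ₑ + ENNReal.ofReal K * ‖v x‖ₑ := by
  simp only [← ofReal_norm]
  rw [← ENNReal.ofReal_mul hK, ← ENNReal.ofReal_add (norm_nonneg _) (by positivity)]
  refine ENNReal.ofReal_le_ofReal ((norm_fderiv_smul_le hχ hv).trans ?_)
  gcongr
  exact mul_le_of_le_one_left (norm_nonneg _) hχ1

end Calculus

theorem norm_gradient_eq_norm_fderiv {F : Type*} [NormedAddCommGroup F] [InnerProductSpace ℝ F]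
    [CompleteSpace F] (f : F → ℝ) (x : F) : ‖gradient f x‖ = ‖fderiv ℝ f x‖ :=
  (InnerProductSpace.toDual ℝ F).symm.norm_map _

theorem exists_contDiff_cutoff {E : Type*} [NormedAddCommGroup E] [NormedSpace ℝ E]
    [FiniteDimensional ℝ E] :
    ∃ K : ℝ, 0 ≤ K ∧ ∀ R : ℝ, 1 ≤ R → ∃ χ : E → ℝ, ContDiff ℝ 1 χ ∧ HasCompactSupport χ ∧
      (∀ x, ‖χ x‖ ≤ 1) ∧ Set.EqOn χ 1 (ball 0 R) ∧ ∀ x, ‖fderiv ℝ χ x‖ ≤ K := by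
  let χ : ContDiffBump (0 : E) := ⟨1, 2, one_pos, one_lt_two⟩
  have hχ : ContDiff ℝ 1 χ := χ.contDiff
  obtain ⟨K, hK⟩ := (χ.hasCompactSupport.fderiv (𝕜 := ℝ)).exists_bound_of_continuous
    (hχ.continuous_fderiv one_ne_zero)
  refine ⟨K, (norm_nonneg _).trans (hK 0), fun R hR => ⟨fun x => χ (R⁻¹ • x),
    hχ.comp (contDiff_const_smul _), ?_, fun x => ?_, fun x hx => ?_, fun x => ?_⟩⟩
  · exact χ.hasCompactSupport.comp_smul (inv_ne_zero (by positivity))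
  · rw [Real.norm_eq_abs, abs_of_nonneg (χ.nonneg' _)]; exact χ.le_one
  · refine χ.one_of_mem_closedBall ?_
    rw [mem_closedBall_zero_iff, norm_smul, norm_inv, Real.norm_eq_abs, abs_of_pos (by positivity),
      inv_mul_le_iff₀ (by positivity)]
    exact (mem_ball_zero_iff.1 hx).le.trans (le_of_eq (mul_one R).symm)
  · rw [fderiv_comp_smul, norm_smul, norm_inv, Real.norm_eq_abs, abs_of_pos (by linarith)]
    simpa using mul_le_mul (inv_le_one_of_one_le₀ hR) (hK (R⁻¹ • x)) (norm_nonneg _) zero_le_one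

theorem Real.mul_log_add_one_le {α t : ℝ} (hα : 0 < α) (ht : 0 ≤ t) :
    t * (log t + 1) ≤ exp α / α * t ^ (1 + α) := by
  rcases ht.eq_or_lt with rfl | ht
  · rw [zero_rpow (by positivity)]; simp
  have het : 0 < exp 1 * t := by positivity
  -- `log y ≤ y ^ α / α` at `y = e t`
  have hlog : log (exp 1 * t) ≤ (exp 1 * t) ^ α / α := by
    have := log_le_sub_one_of_pos (rpow_pos_of_pos het α)
    rw [log_rpow het] at this
    rw [le_div_iff₀ hα]
    nlinarith
  calc t * (log t + 1) = t * log (exp 1 * t) := by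
        rw [log_mul (exp_pos 1).ne' ht.ne', log_exp]; ring
    _ ≤ t * ((exp 1 * t) ^ α / α) := mul_le_mul_of_nonneg_left hlog ht.le
    _ = exp α / α * t ^ (1 + α) := by
        rw [mul_rpow (exp_pos 1).le ht.le, exp_one_rpow, rpow_add ht, rpow_one]; ring

theorem Real.mul_rpow_le_of_mul_le_of_le_mul_rpow {c s T K α : ℝ} (hc : 0 < c) (hs : 0 < s)
    (hα : 0 < α) (hlow : c * s ≤ T) (hup : T ≤ K * s ^ (1 + α)) : c * (c / K) ^ α⁻¹ ≤ T := by
  have hsα : 0 < s ^ α := rpow_pos_of_pos hs α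
  have hcs : c ≤ K * s ^ α := by
    rw [rpow_add hs, rpow_one] at hup
    nlinarith
  have hK : 0 < K := pos_of_mul_pos_left (hc.trans_le hcs) hsα.le
  have hcK : (c / K) ^ α⁻¹ ≤ s := by
    calc (c / K) ^ α⁻¹ ≤ (s ^ α) ^ α⁻¹ := by
          gcongr; rwa [div_le_iff₀' hK]
      _ = s := by rw [← rpow_mul hs.le, mul_inv_cancel₀ hα.ne', rpow_one]
  nlinarith [mul_le_mul_of_nonneg_left hcK hc.le]

theorem Real.holderConjugate_natCast_add_one {n : ℕ} (hn : 0 < n) :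
    Real.HolderConjugate (n + 1 : ℕ) (1 + (n : ℝ)⁻¹) := by
  have hn' : (0 : ℝ) < n := by exact_mod_cast hn
  rw [Real.holderConjugate_iff]
  refine ⟨by push_cast; linarith, ?_⟩
  push_cast
  field_simp
  ring

theorem lintegral_enorm_smul_prod_rpow {X Y F : Type*} [MeasurableSpace X] [MeasurableSpace Y]
    [NormedAddCommGroup F] [NormedSpace ℝ F] {μ : Measure X} {ν : Measure Y} [SFinite ν]
    {v : X → F} {g : Y → ℝ} (hv : Measurable fun x => ‖v x‖ₑ) (hg : Measurable fun y => ‖g y‖ₑ)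
    {p : ℝ} (hp : 0 ≤ p) :
    ∫⁻ z, ‖g z.2 • v z.1‖ₑ ^ p ∂μ.prod ν = (∫⁻ x, ‖v x‖ₑ ^ p ∂μ) * ∫⁻ y, ‖g y‖ₑ ^ p ∂ν := by
  simp_rw [enorm_smul, ENNReal.mul_rpow_of_nonneg _ _ hp, mul_comm]
  exact lintegral_prod_mul (hv.pow_const _).aemeasurable (hg.pow_const _).aemeasurable

theorem lintegral_enorm_fderiv_smul_prod_le {E F G : Type*} [NormedAddCommGroup E]
    [NormedSpace ℝ E] [MeasurableSpace E] [OpensMeasurableSpace E] [NormedAddCommGroup F]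
    [NormedSpace ℝ F] [NormedAddCommGroup G] [NormedSpace ℝ G] [MeasurableSpace G]
    [OpensMeasurableSpace G] {μ : Measure E} {ν : Measure G} [SFinite ν] {v : E → F} {g : G → ℝ}
    (hv : ContDiff ℝ 1 v) (hg : ContDiff ℝ 1 g) :
    ∫⁻ z, ‖fderiv ℝ (fun z : E × G => g z.2 • v z.1) z‖ₑ ∂μ.prod ν ≤
      (∫⁻ x, ‖fderiv ℝ v x‖ₑ ∂μ) * (∫⁻ y, ‖g y‖ₑ ∂ν) +
        (∫⁻ x, ‖v x‖ₑ ∂μ) * ∫⁻ y, ‖fderiv ℝ g y‖ₑ ∂ν := by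
  have hv' := (hv.continuous_fderiv one_ne_zero).enorm.measurable
  have hg' := (hg.continuous_fderiv one_ne_zero).enorm.measurable
  have hm : Measurable fun z : E × G => ‖fderiv ℝ v z.1‖ₑ * ‖g z.2‖ₑ :=
    (hv'.comp measurable_fst).mul (hg.continuous.enorm.measurable.comp measurable_snd)
  calc _ ≤ ∫⁻ z, ‖fderiv ℝ v z.1‖ₑ * ‖g z.2‖ₑ + ‖v z.1‖ₑ * ‖fderiv ℝ g z.2‖ₑ ∂μ.prod ν :=
        lintegral_mono fun z => enorm_fderiv_smul_prod_le (hv.differentiable one_ne_zero)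
          (hg.differentiable one_ne_zero) z
    _ = _ := by
        rw [lintegral_add_left hm,
          lintegral_prod_mul hv'.aemeasurable hg.continuous.enorm.aemeasurable,
          lintegral_prod_mul hv.continuous.enorm.aemeasurable hg'.aemeasurable]

section Sobolev

variable {E F : Type*} [NormedAddCommGroup E] [NormedSpace ℝ E] [MeasurableSpace E] [BorelSpace E]
  [FiniteDimensional ℝ E] (μ : Measure E) [μ.IsAddHaarMeasure] [NormedAddCommGroup F]
  [NormedSpace ℝ F]

/-- Gagliardo–Nirenberg–Sobolev on `E × ℝ`, applied to `(x, y) ↦ g y • v x`, gives the exponent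
`(n + 1) / n` of dimension `n + 1` on the `n`-dimensional space `E`, also for `n = 1`; the price is
the extra term `∫ ‖v‖`. -/
theorem lintegral_rpow_mul_lintegral_rpow_le (hE : 0 < finrank ℝ E) {g : ℝ → ℝ}
    (hg : ContDiff ℝ 1 g) (hgs : HasCompactSupport g) {v : E → F} (hv : ContDiff ℝ 1 v)
    (hvs : HasCompactSupport v) :
    (∫⁻ x, ‖v x‖ₑ ^ (1 + (finrank ℝ E : ℝ)⁻¹) ∂μ) * ∫⁻ y, ‖g y‖ₑ ^ (1 + (finrank ℝ E : ℝ)⁻¹) ≤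
      lintegralPowLePowLIntegralFDerivConst (μ.prod (volume : Measure ℝ))
          (1 + (finrank ℝ E : ℝ)⁻¹) *
        ((∫⁻ x, ‖fderiv ℝ v x‖ₑ ∂μ + ∫⁻ x, ‖v x‖ₑ ∂μ) *
          max (∫⁻ y, ‖g y‖ₑ) (∫⁻ y, ‖fderiv ℝ g y‖ₑ)) ^ (1 + (finrank ℝ E : ℝ)⁻¹) := by
  have hws : HasCompactSupport fun z : E × ℝ => g z.2 • v z.1 :=
    HasCompactSupport.intro (hvs.prod hgs) fun z hz => by
      rcases not_and_or.1 (Set.mem_prod.not.1 hz) with h | h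
      · simp [image_eq_zero_of_notMem_tsupport h]
      · simp [image_eq_zero_of_notMem_tsupport h]
  rw [← lintegral_enorm_smul_prod_rpow hv.continuous.enorm.measurable
    hg.continuous.enorm.measurable (by positivity)]
  refine (lintegral_pow_le_pow_lintegral_fderiv (μ.prod volume)
    (u := fun z : E × ℝ => g z.2 • v z.1) ((hg.comp contDiff_snd).smul (hv.comp contDiff_fst)) hws
    (by simpa using Real.holderConjugate_natCast_add_one hE)).trans ?_
  gcongr
  refine (lintegral_enorm_fderiv_smul_prod_le hv hg).trans ?_
  rw [add_mul]
  gcongr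
  exacts [le_max_left _ _, le_max_right _ _]

theorem exists_lintegral_rpow_le_of_hasCompactSupport (hE : 0 < finrank ℝ E) :
    ∃ C : ℝ≥0, ∀ v : E → F, ContDiff ℝ 1 v → HasCompactSupport v →
      ∫⁻ x, ‖v x‖ₑ ^ (1 + (finrank ℝ E : ℝ)⁻¹) ∂μ ≤
        C * (∫⁻ x, ‖fderiv ℝ v x‖ₑ ∂μ + ∫⁻ x, ‖v x‖ₑ ∂μ) ^ (1 + (finrank ℝ E : ℝ)⁻¹) := by
  set p : ℝ := 1 + (finrank ℝ E : ℝ)⁻¹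
  have hp : 1 ≤ p := le_add_of_nonneg_right (by positivity)
  let g : ContDiffBump (0 : ℝ) := ⟨1, 2, one_pos, one_lt_two⟩
  have hg : ContDiff ℝ 1 g := g.contDiff
  set A := ∫⁻ y, ‖g y‖ₑ
  set B := ∫⁻ y, ‖fderiv ℝ g y‖ₑ
  set G := ∫⁻ y, ‖g y‖ₑ ^ p
  have hA : A ≠ ∞ := (g.continuous.integrable_of_hasCompactSupport g.hasCompactSupport).2.ne
  have hB : B ≠ ∞ := ((hg.continuous_fderiv one_ne_zero).integrable_of_hasCompactSupport
    (g.hasCompactSupport.fderiv (𝕜 := ℝ))).2.ne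
  have hG : G ≠ ∞ := ne_top_of_le_ne_top hA <| lintegral_mono fun y => by
    have h1 : ‖g y‖ₑ ≤ 1 := by
      rw [Real.enorm_eq_ofReal (g.nonneg' y)]; exact ENNReal.ofReal_le_one.2 g.le_one
    simpa using ENNReal.rpow_le_rpow_of_exponent_ge h1 hp
  have hG0 : G ≠ 0 := by
    refine (lt_of_lt_of_le ?_ (setLIntegral_le_lintegral (closedBall 0 1) _)).ne'
    rw [setLIntegral_congr_fun measurableSet_closedBall
      (fun y hy => by rw [g.one_of_mem_closedBall hy, enorm_one, ENNReal.one_rpow]),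
      setLIntegral_one, Real.volume_closedBall]
    norm_num
  set C₀ : ℝ≥0 := lintegralPowLePowLIntegralFDerivConst (μ.prod (volume : Measure ℝ)) p
  have hC : C₀ * max A B ^ p / G ≠ ∞ := ENNReal.div_ne_top
    (ENNReal.mul_ne_top ENNReal.coe_ne_top (ENNReal.rpow_ne_top_of_nonneg (by positivity)
      (max_ne_top hA hB))) hG0
  refine ⟨(C₀ * max A B ^ p / G).toNNReal, fun v hv hvs => ?_⟩
  rw [ENNReal.coe_toNNReal hC]
  calc ∫⁻ x, ‖v x‖ₑ ^ p ∂μ = (∫⁻ x, ‖v x‖ₑ ^ p ∂μ) * G / G :=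
        (ENNReal.mul_div_cancel_right hG0 hG).symm
    _ ≤ C₀ * ((∫⁻ x, ‖fderiv ℝ v x‖ₑ ∂μ + ∫⁻ x, ‖v x‖ₑ ∂μ) * max A B) ^ p / G :=
        ENNReal.div_le_div_right
          (lintegral_rpow_mul_lintegral_rpow_le μ hE hg g.hasCompactSupport hv hvs) _
    _ = _ := by
        rw [ENNReal.mul_rpow_of_nonneg _ _ (zero_le_one.trans hp), div_eq_mul_inv, div_eq_mul_inv]
        ring

theorem exists_lintegral_rpow_le (hE : 0 < finrank ℝ E) :
    ∃ C : ℝ≥0, ∀ v : E → F, ContDiff ℝ 1 v →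
      ∫⁻ x, ‖v x‖ₑ ^ (1 + (finrank ℝ E : ℝ)⁻¹) ∂μ ≤
        C * (∫⁻ x, ‖fderiv ℝ v x‖ₑ ∂μ + ∫⁻ x, ‖v x‖ₑ ∂μ) ^ (1 + (finrank ℝ E : ℝ)⁻¹) := by
  set p : ℝ := 1 + (finrank ℝ E : ℝ)⁻¹
  have hp : 0 ≤ p := by positivity
  obtain ⟨C₀, hC₀⟩ := exists_lintegral_rpow_le_of_hasCompactSupport μ (F := F) hE
  obtain ⟨K, hK0, hcut⟩ := exists_contDiff_cutoff (E := E)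
  set L : ℝ≥0∞ := 1 + ENNReal.ofReal K
  have hC : C₀ * L ^ p ≠ ∞ := ENNReal.mul_ne_top ENNReal.coe_ne_top
    (ENNReal.rpow_ne_top_of_nonneg hp (by simp [L]))
  refine ⟨(C₀ * L ^ p).toNNReal, fun v hv => ?_⟩
  rw [ENNReal.coe_toNNReal hC]
  set S := ∫⁻ x, ‖fderiv ℝ v x‖ₑ ∂μ + ∫⁻ x, ‖v x‖ₑ ∂μ
  have hball (n : ℕ) : ∫⁻ x in ball 0 (n + 1), ‖v x‖ₑ ^ p ∂μ ≤ C₀ * (L * S) ^ p := by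
    obtain ⟨χ, hχ, hχs, hχ1, hχR, hDχ⟩ := hcut (n + 1) (by linarith [n.cast_nonneg (α := ℝ)])
    have hχv : ∀ x, ‖χ x • v x‖ₑ ≤ ‖v x‖ₑ := fun x => by
      rw [enorm_smul, ← ofReal_norm]
      exact mul_le_of_le_one_left zero_le (ENNReal.ofReal_le_one.2 (hχ1 x))
    calc ∫⁻ x in ball 0 (n + 1), ‖v x‖ₑ ^ p ∂μ
        = ∫⁻ x in ball 0 (n + 1), ‖χ x • v x‖ₑ ^ p ∂μ :=
          setLIntegral_congr_fun measurableSet_ball fun x hx => by simp [hχR hx]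
      _ ≤ ∫⁻ x, ‖χ x • v x‖ₑ ^ p ∂μ := setLIntegral_le_lintegral _ _
      _ ≤ C₀ * (∫⁻ x, ‖fderiv ℝ (fun x => χ x • v x) x‖ₑ ∂μ + ∫⁻ x, ‖χ x • v x‖ₑ ∂μ) ^ p :=
          hC₀ _ (hχ.smul hv) hχs.smul_right
      _ ≤ C₀ * (∫⁻ x, ‖fderiv ℝ v x‖ₑ + ENNReal.ofReal K * ‖v x‖ₑ ∂μ + ∫⁻ x, ‖v x‖ₑ ∂μ) ^ p := by
          gcongr with x x
          exacts [enorm_fderiv_smul_le_of_norm_le ((hχ.differentiable one_ne_zero) x)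
            ((hv.differentiable one_ne_zero) x) (hχ1 x) hK0 (hDχ x), hχv x]
      _ ≤ C₀ * (L * S) ^ p := by
          rw [lintegral_add_left (hv.continuous_fderiv one_ne_zero).enorm.measurable,
            lintegral_const_mul' _ _ ENNReal.ofReal_ne_top]
          gcongr
          rw [show L * S = ∫⁻ x, ‖fderiv ℝ v x‖ₑ ∂μ + ENNReal.ofReal K * ∫⁻ x, ‖v x‖ₑ ∂μ
            + ∫⁻ x, ‖v x‖ₑ ∂μ + ENNReal.ofReal K * ∫⁻ x, ‖fderiv ℝ v x‖ₑ ∂μ by ring]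
          exact le_self_add
  rw [← setLIntegral_univ, ← iUnion_ball_nat_succ (0 : E),
    setLIntegral_iUnion_of_directed _ (Monotone.directed_le fun m n hmn => ball_subset_ball
      (by gcongr))]
  exact iSup_le fun n => (hball n).trans_eq (by rw [ENNReal.mul_rpow_of_nonneg _ _ hp, mul_assoc])

theorem exists_lintegral_sq_rpow_le (hE : 0 < finrank ℝ E) :
    ∃ C : ℝ≥0, ∀ u : E → ℝ, ContDiff ℝ 1 u →
      ∫⁻ x, ENNReal.ofReal ((u x ^ 2) ^ (1 + (finrank ℝ E : ℝ)⁻¹)) ∂μ ≤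
        C * (∫⁻ x, ENNReal.ofReal (u x ^ 2 + ‖fderiv ℝ u x‖ ^ 2) ∂μ) ^
          (1 + (finrank ℝ E : ℝ)⁻¹) := by
  set p : ℝ := 1 + (finrank ℝ E : ℝ)⁻¹
  have hp : 0 ≤ p := by positivity
  obtain ⟨C₀, hC₀⟩ := exists_lintegral_rpow_le μ (F := ℝ) hE
  refine ⟨C₀ * 2 ^ p, fun u hu => ?_⟩
  have hsum : ∫⁻ x, ‖fderiv ℝ (fun y => u y ^ 2) x‖ₑ ∂μ + ∫⁻ x, ‖u x ^ 2‖ₑ ∂μ ≤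
      2 * ∫⁻ x, ENNReal.ofReal (u x ^ 2 + ‖fderiv ℝ u x‖ ^ 2) ∂μ := by
    rw [← lintegral_add_left ((hu.pow 2).continuous_fderiv one_ne_zero).enorm.measurable,
      ← lintegral_const_mul' _ _ ENNReal.ofNat_ne_top]
    refine lintegral_mono fun x => ?_
    have hD := norm_fderiv_sq_le ((hu.differentiable one_ne_zero) x)
    calc ‖fderiv ℝ (fun y => u y ^ 2) x‖ₑ + ‖u x ^ 2‖ₑ
        = ENNReal.ofReal (‖fderiv ℝ (fun y => u y ^ 2) x‖ + u x ^ 2) := by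
          rw [ENNReal.ofReal_add (norm_nonneg _) (sq_nonneg _), ofReal_norm,
            Real.enorm_eq_ofReal (sq_nonneg _)]
      _ ≤ ENNReal.ofReal (2 * (u x ^ 2 + ‖fderiv ℝ u x‖ ^ 2)) :=
          ENNReal.ofReal_le_ofReal (by nlinarith [sq_nonneg ‖fderiv ℝ u x‖])
      _ = 2 * ENNReal.ofReal (u x ^ 2 + ‖fderiv ℝ u x‖ ^ 2) := by
          rw [ENNReal.ofReal_mul zero_le_two, ENNReal.ofReal_ofNat]
  calc ∫⁻ x, ENNReal.ofReal ((u x ^ 2) ^ p) ∂μ = ∫⁻ x, ‖u x ^ 2‖ₑ ^ p ∂μ := by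
        simp_rw [Real.enorm_eq_ofReal (sq_nonneg _), ENNReal.ofReal_rpow_of_nonneg (sq_nonneg _) hp]
    _ ≤ C₀ * (2 * ∫⁻ x, ENNReal.ofReal (u x ^ 2 + ‖fderiv ℝ u x‖ ^ 2) ∂μ) ^ p :=
        (hC₀ _ (hu.pow 2)).trans (mul_le_mul_right (ENNReal.rpow_le_rpow hsum hp) _)
    _ = _ := by rw [ENNReal.mul_rpow_of_nonneg _ _ hp, ENNReal.coe_mul, mul_assoc,
          ENNReal.coe_rpow_of_nonneg _ hp, ENNReal.coe_ofNat]

theorem exists_integral_sq_rpow_le (hE : 0 < finrank ℝ E) :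
    ∃ C : ℝ, 0 < C ∧ ∀ u : E → ℝ, ContDiff ℝ 1 u →
      Integrable (fun x => u x ^ 2 + ‖fderiv ℝ u x‖ ^ 2) μ →
      Integrable (fun x => (u x ^ 2) ^ (1 + (finrank ℝ E : ℝ)⁻¹)) μ ∧
        ∫ x, (u x ^ 2) ^ (1 + (finrank ℝ E : ℝ)⁻¹) ∂μ ≤
          C * (∫ x, u x ^ 2 + ‖fderiv ℝ u x‖ ^ 2 ∂μ) ^ (1 + (finrank ℝ E : ℝ)⁻¹) := by
  set p : ℝ := 1 + (finrank ℝ E : ℝ)⁻¹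
  have hp : 0 ≤ p := by positivity
  obtain ⟨C₀, hC₀⟩ := exists_lintegral_sq_rpow_le μ hE
  refine ⟨C₀ + 1, by positivity, fun u hu hint => ?_⟩
  set s := ∫ x, u x ^ 2 + ‖fderiv ℝ u x‖ ^ 2 ∂μ
  have hnn : 0 ≤ᵐ[μ] fun x => (u x ^ 2) ^ p := ae_of_all _ fun x => by positivity
  have hbound : ∫⁻ x, ENNReal.ofReal ((u x ^ 2) ^ p) ∂μ ≤ ENNReal.ofReal (C₀ * s ^ p) := by
    rw [ENNReal.ofReal_mul C₀.coe_nonneg, ENNReal.ofReal_coe_nnreal,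
      ← ENNReal.ofReal_rpow_of_nonneg (integral_nonneg fun x => by positivity) hp,
      ofReal_integral_eq_lintegral_ofReal hint (ae_of_all _ fun x => by positivity)]
    exact hC₀ u hu
  have hint' : Integrable (fun x => (u x ^ 2) ^ p) μ :=
    ⟨((hu.continuous.pow 2).rpow_const fun _ => Or.inr hp).aestronglyMeasurable,
      (hasFiniteIntegral_iff_ofReal hnn).2 (hbound.trans_lt ENNReal.ofReal_lt_top)⟩
  refine ⟨hint', ?_⟩
  calc ∫ x, (u x ^ 2) ^ p ∂μ ≤ C₀ * s ^ p := (ENNReal.ofReal_le_ofReal_iff (by positivity)).1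
        ((ofReal_integral_eq_lintegral_ofReal hint' hnn).trans_le hbound)
    _ ≤ (C₀ + 1) * s ^ p := by gcongr; linarith

end Sobolev

section Energy

variable {X : Type*} [MeasurableSpace X] {μ : Measure X}

theorem mul_integral_le_integral_of_le {u g W : X → ℝ} {c : ℝ} (hc : c ≤ 1)
    (hW : ∀ x, c ≤ W x) (h₁ : Integrable (fun x => u x ^ 2 + g x ^ 2) μ)
    (h₂ : Integrable (fun x => g x ^ 2 + W x * u x ^ 2) μ) :
    c * ∫ x, u x ^ 2 + g x ^ 2 ∂μ ≤ ∫ x, g x ^ 2 + W x * u x ^ 2 ∂μ := by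
  rw [← integral_const_mul]
  refine integral_mono (h₁.const_mul c) h₂ fun x => ?_
  nlinarith [mul_le_mul_of_nonneg_right (hW x) (sq_nonneg (u x)),
    mul_le_mul_of_nonneg_right hc (sq_nonneg (g x))]

theorem integral_le_of_integral_eq_integral_mul_log {g V Q t : X → ℝ} {M α : ℝ} (hα : 0 < α)
    (hQ : ∀ x, 0 ≤ Q x) (hQM : ∀ x, Q x ≤ M) (ht : ∀ x, 0 ≤ t x) (hg : Integrable g μ)
    (hVt : Integrable (fun x => V x * t x) μ) (hQt : Integrable (fun x => Q x * t x) μ)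
    (hlog : Integrable (fun x => Q x * t x * log (t x)) μ)
    (hpow : Integrable (fun x => t x ^ (1 + α)) μ)
    (h : ∫ x, g x + V x * t x ∂μ = ∫ x, Q x * t x * log (t x) ∂μ) :
    ∫ x, g x + (V x + Q x) * t x ∂μ ≤ M * (exp α / α) * ∫ x, t x ^ (1 + α) ∂μ := by
  calc ∫ x, g x + (V x + Q x) * t x ∂μ
      = ∫ x, (g x + V x * t x) + Q x * t x ∂μ := by simp only [add_mul, add_assoc]
    _ = ∫ x, Q x * t x * log (t x) + Q x * t x ∂μ := by
        rw [integral_add (f := fun x => g x + V x * t x) (hg.add hVt) hQt,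
          integral_add hlog hQt, h]
    _ ≤ ∫ x, M * (exp α / α) * t x ^ (1 + α) ∂μ := by
        refine integral_mono (hlog.add hQt) (hpow.const_mul _) fun x => ?_
        calc Q x * t x * log (t x) + Q x * t x = Q x * (t x * (log (t x) + 1)) := by ring
          _ ≤ Q x * (exp α / α * t x ^ (1 + α)) :=
              mul_le_mul_of_nonneg_left (mul_log_add_one_le hα (ht x)) (hQ x)
          _ ≤ M * (exp α / α * t x ^ (1 + α)) :=
              mul_le_mul_of_nonneg_right (hQM x) (by have := ht x; positivity)
          _ = M * (exp α / α) * t x ^ (1 + α) := by ring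
    _ = _ := integral_const_mul _ _

end Energy

theorem integral_sq_add_norm_fderiv_sq_pos {E : Type*} [NormedAddCommGroup E] [NormedSpace ℝ E]
    [MeasurableSpace E] [OpensMeasurableSpace E] {μ : Measure E} [μ.IsOpenPosMeasure]
    {u : E → ℝ} (hu : ContDiff ℝ 1 u) (hu0 : u ≠ 0)
    (hint : Integrable (fun x => u x ^ 2 + ‖fderiv ℝ u x‖ ^ 2) μ) :
    0 < ∫ x, u x ^ 2 + ‖fderiv ℝ u x‖ ^ 2 ∂μ := by
  obtain ⟨x₀, hx₀ : u x₀ ≠ 0⟩ := Function.ne_iff.1 hu0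
  exact integral_pos_of_integrable_nonneg_nonzero (x := x₀)
    ((hu.continuous.pow 2).add ((hu.continuous_fderiv one_ne_zero).norm.pow 2)) hint
    (fun x => by positivity) (by positivity : 0 < u x₀ ^ 2 + ‖fderiv ℝ u x₀‖ ^ 2).ne'

theorem exists_pos_le_integral_of_inNehari {N : ℕ} (hN : 1 ≤ N) {V Q : Euc N → ℝ} {MV MQ c : ℝ}
    (hV : Continuous V) (hQ : Continuous Q) (hMV : ∀ x, ‖V x‖ ≤ MV) (hQ0 : ∀ x, 0 < Q x)
    (hMQ : ∀ x, Q x ≤ MQ) (hc : 0 < c) (hc1 : c ≤ 1) (hcVQ : ∀ x, c ≤ V x + Q x) :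
    ∃ ρ : ℝ, 0 < ρ ∧ ∀ u : Euc N → ℝ, InNehari V Q u →
      ρ ≤ ∫ x, ‖gradient u x‖ ^ 2 + (V x + Q x) * u x ^ 2 := by
  obtain ⟨C, hC, hsob⟩ := exists_integral_sq_rpow_le (volume : Measure (Euc N))
    (by rw [finrank_euclideanSpace_fin]; exact hN)
  simp only [finrank_euclideanSpace_fin] at hsob
  set α : ℝ := (N : ℝ)⁻¹
  have hα : 0 < α := by positivity
  have hMQ' : ∀ x, ‖Q x‖ ≤ MQ := fun x => by rw [norm_of_nonneg (hQ0 x).le]; exact hMQ x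
  set K := MQ * (exp α / α) * C
  have hMQ0 : 0 < MQ := (hQ0 0).trans_le (hMQ 0)
  have hK : 0 < K := by positivity
  refine ⟨c * (c / K) ^ N, by positivity, fun u hu => ?_⟩
  obtain ⟨hu, hu0, hint, hlog, hnehari⟩ := hu
  simp only [norm_gradient_eq_norm_fderiv] at hint hnehari ⊢
  obtain ⟨hpow, hpow_le⟩ := hsob u hu hint
  obtain ⟨hu2, hDu2⟩ := (integrable_add_iff_of_nonneg (hu.continuous.pow 2).aestronglyMeasurable
    (ae_of_all _ fun x => sq_nonneg (u x)) (ae_of_all _ fun x => sq_nonneg _)).1 hint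
  have hVu2 := hu2.bdd_mul hV.aestronglyMeasurable (ae_of_all _ hMV)
  have hQu2 := hu2.bdd_mul hQ.aestronglyMeasurable (ae_of_all _ hMQ')
  have hQlog : Integrable (fun x => Q x * u x ^ 2 * log (u x ^ 2)) :=
    (hlog.bdd_mul hQ.aestronglyMeasurable (ae_of_all _ hMQ')).congr
      (ae_of_all _ fun x => (mul_assoc _ _ _).symm)
  rw [← rpow_natCast, ← inv_inv (N : ℝ)]
  refine Real.mul_rpow_le_of_mul_le_of_le_mul_rpow hc
    (integral_sq_add_norm_fderiv_sq_pos hu hu0 hint) hα (mul_integral_le_integral_of_le hc1 hcVQ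
      hint (hDu2.add ((hVu2.add hQu2).congr (ae_of_all _ fun x => (add_mul _ _ _).symm)))) ?_
  calc _ ≤ MQ * (exp α / α) * ∫ x, (u x ^ 2) ^ (1 + α) :=
        integral_le_of_integral_eq_integral_mul_log hα (fun x => (hQ0 x).le) hMQ
          (fun x => sq_nonneg _) hDu2 hVu2 hQu2 hQlog hpow hnehari
    _ ≤ MQ * (exp α / α) * (C * (∫ x, u x ^ 2 + ‖fderiv ℝ u x‖ ^ 2) ^ (1 + α)) := by gcongr
    _ = K * (∫ x, u x ^ 2 + ‖fderiv ℝ u x‖ ^ 2) ^ (1 + α) := (mul_assoc _ _ _).symm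

theorem exists_norm_le_of_periodic {N : ℕ} {F : Type*} [NormedAddCommGroup F] {f : Euc N → F}
    (hf : Continuous f) (hper : ∀ (x : Euc N) (k : Fin N → ℤ), f (x + intVec k) = f x) :
    ∃ M, ∀ x, ‖f x‖ ≤ M := by
  let cube : Set (Euc N) :=
    (EuclideanSpace.equiv (Fin N) ℝ).symm '' Set.univ.pi fun _ => Set.Icc 0 1
  have hcube : IsCompact cube :=
    (isCompact_univ_pi fun _ => isCompact_Icc).image
      (EuclideanSpace.equiv (Fin N) ℝ).symm.continuous
  obtain ⟨M, hM⟩ := hcube.exists_bound_of_continuousOn hf.continuousOn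
  refine ⟨M, fun x => ?_⟩
  let k : Fin N → ℤ := fun i => ⌊x i⌋
  rw [← sub_add_cancel x (intVec k), hper]
  refine hM _ ⟨x - intVec k, fun i _ => ?_, rfl⟩
  have hi : (x - intVec k) i = x i - ⌊x i⌋ := by simp [intVec, k]
  change (x - intVec k) i ∈ Set.Icc 0 1
  rw [hi]
  exact ⟨sub_nonneg.2 (Int.floor_le _), by linarith [Int.lt_floor_add_one (x i)]⟩

/-- The Nehari set is bounded away from `0` in the norm
`‖u‖ = (∫ (|∇u|² + (V+Q)u²))^{1/2}`. -/
theorem nehari_bounded_away_from_zero (N : ℕ) (hN : 1 ≤ N) (V Q : Euc N → ℝ)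
    (hVcont : Continuous V) (hQsmooth : ContDiff ℝ 1 Q)
    (hVper : ∀ (x : Euc N) (k : Fin N → ℤ), V (x + intVec k) = V x)
    (hQper : ∀ (x : Euc N) (k : Fin N → ℤ), Q (x + intVec k) = Q x)
    (hQpos : 0 < ⨅ x, Q x) (hVQpos : 0 < ⨅ x, V x + Q x) :
    ∃ ρ : ℝ, 0 < ρ ∧ ∀ u : Euc N → ℝ, InNehari V Q u →
      ρ ≤ Real.sqrt (∫ x, (‖gradient u x‖ ^ 2 + (V x + Q x) * (u x) ^ 2)) := by
  obtain ⟨MV, hMV⟩ := exists_norm_le_of_periodic hVcont hVper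
  obtain ⟨MQ, hMQ⟩ := exists_norm_le_of_periodic hQsmooth.continuous hQper
  have hbdd {f : Euc N → ℝ} {M : ℝ} (h : ∀ x, ‖f x‖ ≤ M) : BddBelow (Set.range f) :=
    (isBounded_iff_forall_norm_le.2 ⟨M, Set.forall_mem_range.2 h⟩).bddBelow
  have hVQ (x : Euc N) : ⨅ y, V y + Q y ≤ V x + Q x :=
    ciInf_le (hbdd fun y => (norm_add_le _ _).trans (add_le_add (hMV y) (hMQ y))) x
  obtain ⟨ρ, hρ, hle⟩ := exists_pos_le_integral_of_inNehari hN hVcont hQsmooth.continuous hMV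
    (fun x => hQpos.trans_le (ciInf_le (hbdd hMQ) x)) (fun x => (le_abs_self _).trans (hMQ x))
    (lt_min one_pos hVQpos) (min_le_left _ _) fun x => (min_le_right _ _).trans (hVQ x)
  exact ⟨√ρ, Real.sqrt_pos.2 hρ, fun u hu => Real.sqrt_le_sqrt (hle u hu)⟩
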